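/- Let h ∈ ℝ, h ≠ 0, and for each n ∈ ℤ let w_n : ℝ⁴ → ℝ be a smooth function of (x, y, s, t); set v_n = w_{n,x}, u_n = v_{n,x}, p_n = u_{n,x}. Assume for all n (identically in all variables): u_{n+1} + u_n = (2/h)(v_{n+1} − v_n) − (1/2)(v_{n+1} − v_n)²; v_{n,t} + (1/6)(p_{n,s} + 3 u_n v_{n,s}) − (1/3) w_{n,ys} = 0; and 4(w_{n+1,y} − w_{n,y}) + (p_{n+1} − p_n) + (3/h)(v_{n+1} − v_n)² − (1/2)(v_{n+1} − v_n)³ = 0. Then for all n: 4(v_{n+1,t} − v_{n,t}) + (p_{n+1,s} − p_{n,s}) + 2(u_{n+1} v_{n+1,s} − u_n v_{n,s}) + (u_{n+1} + u_n)(v_{n+1,s} − v_{n,s}) = 0. (This is the t_3-eliminated equation of the discrete KdV hierarchy, whose s-antidifference form gives the discrete recursion operator.) -/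

import Mathlib

noncomputable section

/-- Partial derivative in the first variable `x` of a function on `ℝ⁴`. -/
def pX (f : ℝ × ℝ × ℝ × ℝ → ℝ) : ℝ × ℝ × ℝ × ℝ → ℝ :=
  fun p => deriv (fun x => f (x, p.2)) p.1

/-- Partial derivative in the second variable `y` (playing the role of `t₃`). -/
def pY (f : ℝ × ℝ × ℝ × ℝ → ℝ) : ℝ × ℝ × ℝ × ℝ → ℝ :=
  fun p => deriv (fun y => f (p.1, y, p.2.2)) p.2.1

/-- Partial derivative in the third variable `s` (playing the role of `t_{2m−1}`). -/
def pS (f : ℝ × ℝ × ℝ × ℝ → ℝ) : ℝ × ℝ × ℝ × ℝ → ℝ :=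
  fun p => deriv (fun s => f (p.1, p.2.1, s, p.2.2.2)) p.2.2.1

/-- Partial derivative in the fourth variable `t` (playing the role of `t_{2m+1}`). -/
def pT (f : ℝ × ℝ × ℝ × ℝ → ℝ) : ℝ × ℝ × ℝ × ℝ → ℝ :=
  fun p => deriv (fun t => f (p.1, p.2.1, p.2.2.1, t)) p.2.2.2


abbrev E4 := ℝ × ℝ × ℝ × ℝ

lemma curveX_hasDerivAt (z : E4) (x : ℝ) :
    HasDerivAt (fun x : ℝ => ((x, z.2) : E4)) ((1,0,0,0) : E4) x :=
  HasDerivAt.prodMk (hasDerivAt_id x) (hasDerivAt_const x z.2)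

lemma curveY_hasDerivAt (z : E4) (y : ℝ) :
    HasDerivAt (fun y : ℝ => ((z.1, y, z.2.2) : E4)) ((0,1,0,0) : E4) y :=
  HasDerivAt.prodMk (hasDerivAt_const y z.1) (HasDerivAt.prodMk (hasDerivAt_id y) (hasDerivAt_const y z.2.2))

lemma curveS_hasDerivAt (z : E4) (s : ℝ) :
    HasDerivAt (fun s : ℝ => ((z.1, z.2.1, s, z.2.2.2) : E4)) ((0,0,1,0) : E4) s :=
  HasDerivAt.prodMk (hasDerivAt_const s z.1) (HasDerivAt.prodMk (hasDerivAt_const s z.2.1)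
    (HasDerivAt.prodMk (hasDerivAt_id s) (hasDerivAt_const s z.2.2.2)))

lemma pX_eq (f : E4 → ℝ) {z : E4} (hf : DifferentiableAt ℝ f z) :
    pX f z = fderiv ℝ f z (1,0,0,0) := by
  have := (hf.hasFDerivAt.comp_hasDerivAt z.1 (curveX_hasDerivAt z z.1))
  exact this.deriv

lemma pY_eq (f : E4 → ℝ) {z : E4} (hf : DifferentiableAt ℝ f z) :
    pY f z = fderiv ℝ f z (0,1,0,0) := by
  have := (hf.hasFDerivAt.comp_hasDerivAt z.2.1 (curveY_hasDerivAt z z.2.1))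
  exact this.deriv

lemma pS_eq (f : E4 → ℝ) {z : E4} (hf : DifferentiableAt ℝ f z) :
    pS f z = fderiv ℝ f z (0,0,1,0) := by
  have := (hf.hasFDerivAt.comp_hasDerivAt z.2.2.1 (curveS_hasDerivAt z z.2.2.1))
  exact this.deriv

lemma contDiff_dirDeriv (f : E4 → ℝ) (hf : ContDiff ℝ (⊤ : ℕ∞) f) (e : E4) :
    ContDiff ℝ (⊤ : ℕ∞) (fun z => fderiv ℝ f z e) :=
  (hf.fderiv_right (by simp)).clm_apply contDiff_const

lemma contDiff_pX (f : E4 → ℝ) (hf : ContDiff ℝ (⊤ : ℕ∞) f) : ContDiff ℝ (⊤ : ℕ∞) (pX f) := by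
  have : pX f = fun z => fderiv ℝ f z (1,0,0,0) :=
    funext fun z => pX_eq f ((hf.differentiable (by simp)) z)
  rw [this]; exact contDiff_dirDeriv f hf _

lemma contDiff_pY (f : E4 → ℝ) (hf : ContDiff ℝ (⊤ : ℕ∞) f) : ContDiff ℝ (⊤ : ℕ∞) (pY f) := by
  have : pY f = fun z => fderiv ℝ f z (0,1,0,0) :=
    funext fun z => pY_eq f ((hf.differentiable (by simp)) z)
  rw [this]; exact contDiff_dirDeriv f hf _

lemma dirDeriv_dirDeriv (f : E4 → ℝ) (hf : ContDiff ℝ (⊤ : ℕ∞) f) (e e' : E4) (z : E4) :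
    fderiv ℝ (fun z => fderiv ℝ f z e) z e' = fderiv ℝ (fderiv ℝ f) z e' e := by
  rw [fderiv_clm_apply ((hf.fderiv_right (m := 1) (by exact WithTop.coe_le_coe.mpr le_top)).differentiable one_ne_zero z)
    (differentiableAt_const e)]
  simp

lemma swap_pS_pY (f : E4 → ℝ) (hf : ContDiff ℝ (⊤ : ℕ∞) f) (z : E4) :
    pS (pY f) z = pY (pS f) z := by
  have hdf := hf.differentiable (by simp)
  have hY : pY f = fun z => fderiv ℝ f z (0,1,0,0) := funext fun z => pY_eq f (hdf z)
  have hS : pS f = fun z => fderiv ℝ f z (0,0,1,0) := funext fun z => pS_eq f (hdf z)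
  have sym := hf.contDiffAt.isSymmSndFDerivAt (x := z) (by rw [minSmoothness_of_isRCLikeNormedField]; exact WithTop.coe_le_coe.mpr (le_top : (2 : ℕ∞) ≤ ⊤))
  rw [hY, hS, pS_eq _ ((contDiff_dirDeriv f hf _).differentiable (by simp) z),
    pY_eq _ ((contDiff_dirDeriv f hf _).differentiable (by simp) z),
    dirDeriv_dirDeriv f hf, dirDeriv_dirDeriv f hf]
  exact (sym _ _).symm

lemma hasDerivAt_pS (f : E4 → ℝ) (hf : ContDiff ℝ (⊤ : ℕ∞) f) (z : E4) :
    HasDerivAt (fun s => f (z.1, z.2.1, s, z.2.2.2)) (pS f z) z.2.2.1 :=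
  ((hf.differentiable (by simp)) _).hasFDerivAt.comp_hasDerivAt _ (curveS_hasDerivAt z z.2.2.1)
    |>.congr_deriv (pS_eq f ((hf.differentiable (by simp)) z)).symm

theorem stmt_17
    (h : ℝ) (hh : h ≠ 0)
    (w : ℤ → ℝ × ℝ × ℝ × ℝ → ℝ) (hw : ∀ n, ContDiff ℝ (⊤ : ℕ∞) (w n))
    (v u p : ℤ → ℝ × ℝ × ℝ × ℝ → ℝ)
    (hv : ∀ n, v n = pX (w n)) (hu : ∀ n, u n = pX (v n)) (hp : ∀ n, p n = pX (u n))
    (hlat : ∀ n z, u (n + 1) z + u n z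
        = (2 / h) * (v (n + 1) z - v n z) - (1 / 2) * (v (n + 1) z - v n z) ^ 2)
    (hflow : ∀ n z, pT (v n) z + (1 / 6) * (pS (p n) z + 3 * u n z * pS (v n) z)
        - (1 / 3) * pY (pS (w n)) z = 0)
    (hint : ∀ n z, 4 * (pY (w (n + 1)) z - pY (w n) z) + (p (n + 1) z - p n z)
        + (3 / h) * (v (n + 1) z - v n z) ^ 2
        - (1 / 2) * (v (n + 1) z - v n z) ^ 3 = 0) :
    ∀ n z, 4 * (pT (v (n + 1)) z - pT (v n) z) + (pS (p (n + 1)) z - pS (p n) z)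
        + 2 * (u (n + 1) z * pS (v (n + 1)) z - u n z * pS (v n) z)
        + (u (n + 1) z + u n z) * (pS (v (n + 1)) z - pS (v n) z) = 0 := by
  have sv : ∀ n, ContDiff ℝ (⊤ : ℕ∞) (v n) := fun n => by
    rw [hv]; exact contDiff_pX _ (hw n)
  have su : ∀ n, ContDiff ℝ (⊤ : ℕ∞) (u n) := fun n => by
    rw [hu]; exact contDiff_pX _ (sv n)
  have sp : ∀ n, ContDiff ℝ (⊤ : ℕ∞) (p n) := fun n => by
    rw [hp]; exact contDiff_pX _ (su n)
  intro n z
  -- HasDerivAt facts along the s-line through z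
  have hPY1 := hasDerivAt_pS (pY (w (n+1))) (contDiff_pY _ (hw (n+1))) z
  have hPY0 := hasDerivAt_pS (pY (w n)) (contDiff_pY _ (hw n)) z
  have hP1 := hasDerivAt_pS (p (n+1)) (sp (n+1)) z
  have hP0 := hasDerivAt_pS (p n) (sp n) z
  have hV1 := hasDerivAt_pS (v (n+1)) (sv (n+1)) z
  have hV0 := hasDerivAt_pS (v n) (sv n) z
  have hH := ((((hPY1.sub hPY0).const_mul (4:ℝ)).add (hP1.sub hP0)).add
      (((hV1.sub hV0).pow 2).const_mul ((3:ℝ)/h))).sub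
      (((hV1.sub hV0).pow 3).const_mul ((1:ℝ)/2))
  have hfun : (fun s => 4 * (pY (w (n+1)) (z.1, z.2.1, s, z.2.2.2)
        - pY (w n) (z.1, z.2.1, s, z.2.2.2))
      + (p (n+1) (z.1, z.2.1, s, z.2.2.2) - p n (z.1, z.2.1, s, z.2.2.2))
      + (3/h) * (v (n+1) (z.1, z.2.1, s, z.2.2.2) - v n (z.1, z.2.1, s, z.2.2.2)) ^ 2
      - (1/2) * (v (n+1) (z.1, z.2.1, s, z.2.2.2) - v n (z.1, z.2.1, s, z.2.2.2)) ^ 3)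
      = fun _ : ℝ => (0:ℝ) := funext fun s => hint n (z.1, z.2.1, s, z.2.2.2)
  replace hH := hH.congr_of_eventuallyEq (f₁ := fun _ : ℝ => (0:ℝ))
    (Filter.Eventually.of_forall fun s => (congrFun hfun s).symm)
  have hD := hH.unique (hasDerivAt_const _ _)
  simp only [Prod.mk.eta, Pi.sub_apply] at hD
  rw [swap_pS_pY (w (n+1)) (hw (n+1)), swap_pS_pY (w n) (hw n)] at hD
  have e1 := hflow n z
  have e2 := hflow (n+1) z
  have e3 := hlat n z
  linear_combination 4*e2 - 4*e1 + (1/3)*hD + (pS (v (n+1)) z - pS (v n) z)*e3
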